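/- Fix m, p, L, N ∈ ℕ, a data pair (u_d, y_d) of length T, an initial pair (u_ini, y_ini) of length T_ini, and a future input u_f : {0,…,T_f−1} → ℝ^m with T_f ≥ 1. Let ℓ ∈ ℕ be such that T_ini ≥ ℓ and ℓ(C',A') ≤ ℓ for every explaining system (n', A', B', C', D'). Suppose there exists y_f : {0,…,T_f−1} → ℝ^p such that for every t ∈ {0,…,T_f−1}, writing u^t = u_ini·(u_f(0),…,u_f(t−1)) and y^t = y_ini·(y_f(0),…,y_f(t−1)) (sequences of length T_ini+t), there exist vectors g₁ ∈ ℝ^{T−ℓ} (present only if T ≥ ℓ+1, otherwise omitted) and g₂ ∈ ℝ^{T_ini+t−ℓ} such that H_{ℓ+1}(u_d) g₁ + H_{ℓ+1}(u^t) g₂ equals the stacked vector (u^t(T_ini+t−ℓ), …, u^t(T_ini+t−1), u_f(t)) and H_{ℓ+1}(y_d) g₁ + H_{ℓ+1}(y^t) g₂ equals the stacked vector (y^t(T_ini+t−ℓ), …, y^t(T_ini+t−1), y_f(t)). Then for every explaining system (n', A', B', C', D'), the concatenation (u_ini·u_f, y_ini·y_f) is a trajectory of length T_ini+T_f of (A',B',C',D'),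 and for each explaining system y_f is the unique output with this property; in particular (u_d, y_d) is informative for unique prediction of u_f from (u_ini, y_ini). -/

import Mathlib

/-!
Since the lag of an explaining system is at most `ℓ`, its unobservable subspaces `ker O_k` are
constant for `k ≥ ℓ`. Hence two trajectories with the same inputs whose outputs agree on `ℓ`
consecutive steps also agree at the next step. Trajectories form a subspace that is stable under
time shifts, so the Hankel condition at time `t` exhibits the window of length `ℓ + 1` ending at
`Tini + t` as a window of a trajectory: a combination of windows of the data and of the prefix
woven so far. Comparing it with the true response of the system from its initial state gives
`yf t = C x (Tini + t) + D (uf t)`, by induction on `t`. Uniqueness follows from the same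
comparison, because `yini` has length at least `ℓ`.
-/

/-- `(u, y)` is a trajectory of length `T` of the linear system `(A, B, C, D)`. -/
def IsTraj {n m p : ℕ} (A : Matrix (Fin n) (Fin n) ℝ) (B : Matrix (Fin n) (Fin m) ℝ)
    (C : Matrix (Fin p) (Fin n) ℝ) (D : Matrix (Fin p) (Fin m) ℝ)
    (T : ℕ) (u : Fin T → Fin m → ℝ) (y : Fin T → Fin p → ℝ) : Prop :=
  ∃ x : Fin (T + 1) → Fin n → ℝ,
    ∀ t : Fin T,
      x t.succ = A.mulVec (x t.castSucc) + B.mulVec (u t) ∧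
      y t = C.mulVec (x t.castSucc) + D.mulVec (u t)

/-- Observability matrix of depth `k` of the pair `(C, A)`. -/
noncomputable def obsMat {n p : ℕ} (A : Matrix (Fin n) (Fin n) ℝ)
    (C : Matrix (Fin p) (Fin n) ℝ) (k : ℕ) : Matrix (Fin k × Fin p) (Fin n) ℝ :=
  fun ir j => (C * A ^ (ir.1 : ℕ)) ir.2 j

/-- The lag of the pair `(C, A)`: the least `k` with `rank O_k = rank O_{k+1}`. -/
noncomputable def lag {n p : ℕ} (A : Matrix (Fin n) (Fin n) ℝ)
    (C : Matrix (Fin p) (Fin n) ℝ) : ℕ :=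
  sInf {k | (obsMat A C k).rank = (obsMat A C (k + 1)).rank}

/-- `(n', A', B', C', D')` is an explaining system for the data `(ud, yd)` and the
initial trajectory `(uini, yini)`, within the model class of order at most `N` and
lag at most `L`. -/
def Explaining {m p : ℕ} (L N T Tini : ℕ)
    (ud : Fin T → Fin m → ℝ) (yd : Fin T → Fin p → ℝ)
    (uini : Fin Tini → Fin m → ℝ) (yini : Fin Tini → Fin p → ℝ)
    {n' : ℕ} (A' : Matrix (Fin n') (Fin n') ℝ) (B' : Matrix (Fin n') (Fin m) ℝ)
    (C' : Matrix (Fin p) (Fin n') ℝ) (D' : Matrix (Fin p) (Fin m) ℝ) : Prop :=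
  n' ≤ N ∧ lag A' C' ≤ L ∧ IsTraj A' B' C' D' T ud yd ∧ IsTraj A' B' C' D' Tini uini yini

/-- The data `(ud, yd)` is informative for unique prediction of `uf` from
`(uini, yini)`: (i) every explaining system has exactly one response `yf` to `uf`
extending `(uini, yini)`, and (ii) some `yf` works for all explaining systems. -/
def Informative {m p : ℕ} (L N T Tini Tf : ℕ)
    (ud : Fin T → Fin m → ℝ) (yd : Fin T → Fin p → ℝ)
    (uini : Fin Tini → Fin m → ℝ) (yini : Fin Tini → Fin p → ℝ)
    (uf : Fin Tf → Fin m → ℝ) : Prop :=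
  (∀ (n' : ℕ) (A' : Matrix (Fin n') (Fin n') ℝ) (B' : Matrix (Fin n') (Fin m) ℝ)
      (C' : Matrix (Fin p) (Fin n') ℝ) (D' : Matrix (Fin p) (Fin m) ℝ),
      Explaining L N T Tini ud yd uini yini A' B' C' D' →
      ∃! yf : Fin Tf → Fin p → ℝ,
        IsTraj A' B' C' D' (Tini + Tf) (Fin.append uini uf) (Fin.append yini yf)) ∧
  (∃ yf : Fin Tf → Fin p → ℝ,
      ∀ (n' : ℕ) (A' : Matrix (Fin n') (Fin n') ℝ) (B' : Matrix (Fin n') (Fin m) ℝ)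
        (C' : Matrix (Fin p) (Fin n') ℝ) (D' : Matrix (Fin p) (Fin m) ℝ),
        Explaining L N T Tini ud yd uini yini A' B' C' D' →
        IsTraj A' B' C' D' (Tini + Tf) (Fin.append uini uf) (Fin.append yini yf))

/-- The concatenation of `w` (length `Tini`) with the first `t` values of `wf`:
the sequence `w^t` of length `Tini + t`. -/
def catUpTo {q Tini Tf : ℕ} (w : Fin Tini → Fin q → ℝ) (wf : Fin Tf → Fin q → ℝ)
    (t : Fin Tf) : Fin (Tini + (t : ℕ)) → Fin q → ℝ :=
  Fin.append w (fun s : Fin (t : ℕ) => wf ⟨s, by have := s.2; have := t.2; omega⟩)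

section Observability

open Matrix

variable {n p : ℕ} (A : Matrix (Fin n) (Fin n) ℝ) (C : Matrix (Fin p) (Fin n) ℝ)

noncomputable def obsKer (k : ℕ) : Submodule ℝ (Fin n → ℝ) :=
  LinearMap.ker (obsMat A C k).mulVecLin

variable {A C}

theorem mem_obsKer_iff {k : ℕ} {v : Fin n → ℝ} :
    v ∈ obsKer A C k ↔ ∀ i < k, C *ᵥ (A ^ i *ᵥ v) = 0 := by
  simp only [obsKer, LinearMap.mem_ker, mulVecLin_apply, mulVec_mulVec, funext_iff,
    Prod.forall, Fin.forall_iff, Pi.zero_apply]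
  rfl

theorem mem_obsKer_succ_iff {k : ℕ} {v : Fin n → ℝ} :
    v ∈ obsKer A C (k + 1) ↔ C *ᵥ v = 0 ∧ A *ᵥ v ∈ obsKer A C k := by
  simp only [mem_obsKer_iff, Nat.forall_lt_succ_left, pow_zero, one_mulVec, pow_succ,
    ← mulVec_mulVec]

variable (A C)

theorem obsKer_antitone : Antitone (obsKer A C) := fun _ _ hkl _ hv =>
  mem_obsKer_iff.2 fun i hi => mem_obsKer_iff.1 hv i (hi.trans_le hkl)

theorem rank_obsMat_add_finrank_obsKer (k : ℕ) :
    (obsMat A C k).rank + Module.finrank ℝ (obsKer A C k) = n :=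
  (LinearMap.finrank_range_add_finrank_ker _).trans (Module.finrank_fin_fun ℝ)

variable {A C}

theorem rank_obsMat_eq_succ_iff {k : ℕ} :
    (obsMat A C k).rank = (obsMat A C (k + 1)).rank ↔
      obsKer A C k = obsKer A C (k + 1) := by
  have hk := rank_obsMat_add_finrank_obsKer A C k
  have hk₁ := rank_obsMat_add_finrank_obsKer A C (k + 1)
  constructor
  · intro h
    exact (Submodule.eq_of_le_of_finrank_eq
      (obsKer_antitone A C (Nat.le_add_right k 1)) (by omega)).symm
  · intro h
    rw [h] at hk
    omega

theorem obsKer_succ_eq_of_eq {k : ℕ} (h : obsKer A C k = obsKer A C (k + 1)) :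
    obsKer A C (k + 1) = obsKer A C (k + 2) := by
  ext v
  rw [mem_obsKer_succ_iff, mem_obsKer_succ_iff (k := k + 1), h]

theorem obsKer_eq_succ_of_lag_le {ℓ : ℕ} (hlag : lag A C ≤ ℓ) :
    obsKer A C ℓ = obsKer A C (ℓ + 1) := by
  -- `lag` is an `sInf`, so without this nonemptiness it could be the junk value `0`.
  obtain ⟨k, hk⟩ := IsArtinian.monotone_stabilizes
    ⟨fun k => OrderDual.toDual (obsKer A C k), obsKer_antitone A C⟩
  have hne : {k | (obsMat A C k).rank = (obsMat A C (k + 1)).rank}.Nonempty :=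
    ⟨k, rank_obsMat_eq_succ_iff.2 (hk (k + 1) (Nat.le_add_right k 1))⟩
  induction ℓ, hlag using Nat.le_induction with
  | base => exact rank_obsMat_eq_succ_iff.1 (Nat.sInf_mem hne)
  | succ ℓ _ ih => exact obsKer_succ_eq_of_eq ih

end Observability

section Trajectories

open Matrix

variable {R σ ι ο : Type*} [CommRing R] [Fintype σ] [Fintype ι]
  (A : Matrix σ σ R) (B : Matrix σ ι R) (C : Matrix ο σ R) (D : Matrix ο ι R)

def trajectories (T : ℕ) :
    Submodule R ((ℕ → σ → R) × (ℕ → ι → R) × (ℕ → ο → R)) where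
  carrier := {w | ∀ t < T, w.1 (t + 1) = A *ᵥ w.1 t + B *ᵥ w.2.1 t ∧
    w.2.2 t = C *ᵥ w.1 t + D *ᵥ w.2.1 t}
  add_mem' := fun hv hw t ht => by
    simp only [Prod.fst_add, Prod.snd_add, Pi.add_apply, mulVec_add, (hv t ht).1,
      (hv t ht).2, (hw t ht).1, (hw t ht).2]
    constructor <;> abel
  zero_mem' := fun t _ => by simp
  smul_mem' := fun c v hv t ht => by
    simp only [Prod.smul_fst, Prod.smul_snd, Pi.smul_apply, mulVec_smul, (hv t ht).1,
      (hv t ht).2, smul_add, and_self]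

variable {A B C D}

theorem mem_trajectories {T : ℕ} {x : ℕ → σ → R} {u : ℕ → ι → R} {y : ℕ → ο → R} :
    (x, u, y) ∈ trajectories A B C D T ↔
      ∀ t < T, x (t + 1) = A *ᵥ x t + B *ᵥ u t ∧ y t = C *ᵥ x t + D *ᵥ u t :=
  Iff.rfl

theorem shift_mem_trajectories {T T' s : ℕ} {x : ℕ → σ → R} {u : ℕ → ι → R}
    {y : ℕ → ο → R} (h : (x, u, y) ∈ trajectories A B C D T) (hs : s + T' ≤ T) :
    (fun i => x (s + i), fun i => u (s + i), fun i => y (s + i)) ∈ trajectories A B C D T' :=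
  fun t ht => h (s + t) (by omega)

theorem sum_smul_shift_mem_trajectories {κ : Type*} [Fintype κ] {T T' : ℕ}
    {x : ℕ → σ → R} {u : ℕ → ι → R} {y : ℕ → ο → R} (h : (x, u, y) ∈ trajectories A B C D T)
    (g : κ → R) (s : κ → ℕ) (hs : ∀ j, s j + T' ≤ T) :
    (fun i => ∑ j, g j • x (i + s j), fun i => ∑ j, g j • u (i + s j),
      fun i => ∑ j, g j • y (i + s j)) ∈ trajectories A B C D T' := by
  rw [mem_trajectories] at h
  intro t ht
  have hst : ∀ j, t + s j < T := fun j => by have := hs j; omega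
  simp only [mulVec_sum, mulVec_smul, ← Finset.sum_add_distrib, ← smul_add]
  refine ⟨Finset.sum_congr rfl fun j _ => ?_, Finset.sum_congr rfl fun j _ => ?_⟩
  · rw [Nat.add_right_comm, (h _ (hst j)).1]
  · rw [(h _ (hst j)).2]

def stateSeq (A : Matrix σ σ R) (B : Matrix σ ι R) (x₀ : σ → R) (u : ℕ → ι → R) :
    ℕ → σ → R
  | 0 => x₀
  | t + 1 => A *ᵥ stateSeq A B x₀ u t + B *ᵥ u t

theorem stateSeq_mem_trajectories_iff {T : ℕ} {x₀ : σ → R} {u : ℕ → ι → R}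
    {y : ℕ → ο → R} :
    (stateSeq A B x₀ u, u, y) ∈ trajectories A B C D T ↔
      ∀ t < T, y t = C *ᵥ stateSeq A B x₀ u t + D *ᵥ u t := by
  simp only [mem_trajectories, stateSeq, true_and]

theorem stateSeq_mem_trajectories {T : ℕ} {x : ℕ → σ → R} {u : ℕ → ι → R}
    {y : ℕ → ο → R} (h : (x, u, y) ∈ trajectories A B C D T) :
    (stateSeq A B (x 0) u, u, y) ∈ trajectories A B C D T := by
  rw [mem_trajectories] at h
  have hx : ∀ t ≤ T, stateSeq A B (x 0) u t = x t := by
    intro t ht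
    induction t with
    | zero => rfl
    | succ t ih => rw [stateSeq, ih (by omega), (h t ht).1]
  exact stateSeq_mem_trajectories_iff.2 fun t ht => by rw [hx t ht.le, (h t ht).2]

end Trajectories

section FiniteSequences

theorem Fin.append_mk_of_lt {α : Sort*} {a b k : ℕ} (u : Fin a → α) (v : Fin b → α)
    (hk : k < a) : Fin.append u v ⟨k, by omega⟩ = u ⟨k, hk⟩ :=
  Fin.append_left u v ⟨k, hk⟩

theorem Fin.append_mk_of_le {α : Sort*} {a b k : ℕ} (u : Fin a → α) (v : Fin b → α)
    (hk : a ≤ k) (hk' : k < a + b) : Fin.append u v ⟨k, hk'⟩ = v ⟨k - a, by omega⟩ := by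
  rw [← Fin.append_right u v]
  congr
  dsimp only
  omega

theorem extend_val_of_lt {α : Type*} [Zero α] {T k : ℕ} (w : Fin T → α) (hk : k < T) :
    Function.extend Fin.val w 0 k = w ⟨k, hk⟩ :=
  Fin.val_injective.extend_apply w 0 ⟨k, hk⟩

theorem extend_val_append_of_lt {α : Type*} [Zero α] {a b k : ℕ} (u : Fin a → α)
    (v : Fin b → α) (hk : k < a) :
    Function.extend Fin.val (Fin.append u v) 0 k = u ⟨k, hk⟩ := by
  rw [extend_val_of_lt _ (by omega), Fin.append_mk_of_lt _ _ hk]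

theorem extend_val_append_val {α : Type*} [Zero α] {a b : ℕ} (u : Fin a → α)
    (v : Fin b → α) (t : Fin a) : Function.extend Fin.val (Fin.append u v) 0 t = u t :=
  extend_val_append_of_lt u v t.2

theorem extend_val_append_add {α : Type*} [Zero α] {a b : ℕ} (u : Fin a → α)
    (v : Fin b → α) (t : Fin b) : Function.extend Fin.val (Fin.append u v) 0 (a + t) = v t :=
  Fin.val_injective.extend_apply _ 0 (Fin.natAdd a t) |>.trans (Fin.append_right u v t)

theorem catUpTo_eq_extend_val {q Tini Tf : ℕ} (w : Fin Tini → Fin q → ℝ)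
    (wf : Fin Tf → Fin q → ℝ) (t : Fin Tf) {k : ℕ} (hk : k < Tini + t) :
    catUpTo w wf t ⟨k, hk⟩ = Function.extend Fin.val (Fin.append w wf) 0 k := by
  rw [extend_val_of_lt _ (by omega), catUpTo]
  obtain h | h := lt_or_ge k Tini
  · rw [Fin.append_mk_of_lt _ _ h, Fin.append_mk_of_lt _ _ h]
  · rw [Fin.append_mk_of_le _ _ h, Fin.append_mk_of_le _ _ h]

theorem hankel_window_eq_extend_val {ℓ q T Tini Tf : ℕ} (hTini : ℓ ≤ Tini)
    (wd : Fin T → Fin q → ℝ) (w : Fin Tini → Fin q → ℝ) (wf : Fin Tf → Fin q → ℝ) (t : Fin Tf)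
    (g₁ : Fin (T - ℓ) → ℝ) (g₂ : Fin (Tini + (t : ℕ) - ℓ) → ℝ)
    (h : ∀ i : Fin (ℓ + 1),
      (∑ j : Fin (T - ℓ), g₁ j • wd ⟨i + j, by have := i.2; have := j.2; omega⟩) +
      (∑ j : Fin (Tini + (t : ℕ) - ℓ),
          g₂ j • catUpTo w wf t ⟨i + j, by have := i.2; have := j.2; omega⟩) =
      Fin.append
        (fun r : Fin ℓ => catUpTo w wf t ⟨Tini + (t : ℕ) - ℓ + r, by have := r.2; omega⟩)
        (fun _ : Fin 1 => wf t) i) :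
    ∀ i ≤ ℓ, ∑ j, g₁ j • Function.extend Fin.val wd 0 (i + j) +
        ∑ j, g₂ j • Function.extend Fin.val (Fin.append w wf) 0 (i + j) =
      Function.extend Fin.val (Fin.append w wf) 0 (Tini + t - ℓ + i) := by
  intro i hi
  have hwin := h ⟨i, by omega⟩
  simp only [catUpTo_eq_extend_val, ← Fin.val_injective.extend_apply wd 0] at hwin
  rw [hwin]
  obtain hi | rfl := hi.lt_or_eq
  · rw [Fin.append_mk_of_lt _ _ hi]
  · rw [Fin.append_mk_of_le _ _ le_rfl (by omega), extend_val_of_lt _ (by omega),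
      Fin.append_mk_of_le _ _ (by omega) (by omega)]
    exact congrArg wf (Fin.ext (by dsimp only; omega))

end FiniteSequences

section LinearSystems

open Matrix

variable {n m p : ℕ} {A : Matrix (Fin n) (Fin n) ℝ} {B : Matrix (Fin n) (Fin m) ℝ}
  {C : Matrix (Fin p) (Fin n) ℝ} {D : Matrix (Fin p) (Fin m) ℝ} {ℓ : ℕ}

theorem isTraj_restrict_iff {T : ℕ} {u : ℕ → Fin m → ℝ} {y : ℕ → Fin p → ℝ} :
    IsTraj A B C D T (fun t => u t) (fun t => y t) ↔
      ∃ x, (x, u, y) ∈ trajectories A B C D T := by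
  constructor
  · rintro ⟨x, hx⟩
    refine ⟨Function.extend Fin.val x 0, mem_trajectories.2 fun t ht => ?_⟩
    rw [extend_val_of_lt x (by omega), extend_val_of_lt x (by omega)]
    exact hx ⟨t, ht⟩
  · rintro ⟨x, hx⟩
    exact ⟨fun t => x t, fun t => hx t t.2⟩

theorem isTraj_iff_extend {T : ℕ} {u : Fin T → Fin m → ℝ} {y : Fin T → Fin p → ℝ} :
    IsTraj A B C D T u y ↔
      ∃ x, (x, Function.extend Fin.val u 0, Function.extend Fin.val y 0) ∈
        trajectories A B C D T := by
  simpa only [Fin.val_injective.extend_apply] using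
    isTraj_restrict_iff (A := A) (B := B) (C := C) (D := D) (T := T)
      (u := Function.extend Fin.val u 0) (y := Function.extend Fin.val y 0)

theorem mulVec_eq_zero_of_lag_le (hlag : lag A C ≤ ℓ) {x : ℕ → Fin n → ℝ}
    {u : ℕ → Fin m → ℝ} {y : ℕ → Fin p → ℝ} (h : (x, u, y) ∈ trajectories A B C D ℓ)
    (hu : ∀ i < ℓ, u i = 0) (hy : ∀ i < ℓ, y i = 0) : C *ᵥ x ℓ = 0 := by
  rw [mem_trajectories] at h
  have hx : ∀ i ≤ ℓ, x i = A ^ i *ᵥ x 0 := by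
    intro i hi
    induction i with
    | zero => rw [pow_zero, one_mulVec]
    | succ i ih =>
      rw [(h i hi).1, hu i hi, mulVec_zero, add_zero, ih (by omega), mulVec_mulVec, pow_succ']
  have hx₀ : x 0 ∈ obsKer A C ℓ := mem_obsKer_iff.2 fun i hi => by
    have hyi := (h i hi).2
    rw [hy i hi, hu i hi, mulVec_zero, add_zero, hx i hi.le] at hyi
    exact hyi.symm
  rw [obsKer_eq_succ_of_lag_le hlag, mem_obsKer_iff] at hx₀
  rw [hx ℓ le_rfl]
  exact hx₀ ℓ ℓ.lt_succ_self

theorem mulVec_eq_of_lag_le (hlag : lag A C ≤ ℓ) {x x' : ℕ → Fin n → ℝ}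
    {u u' : ℕ → Fin m → ℝ} {y y' : ℕ → Fin p → ℝ} (h : (x, u, y) ∈ trajectories A B C D ℓ)
    (h' : (x', u', y') ∈ trajectories A B C D ℓ) (hu : ∀ i < ℓ, u i = u' i)
    (hy : ∀ i < ℓ, y i = y' i) : C *ᵥ x ℓ = C *ᵥ x' ℓ := by
  have hmem := sub_mem h h'
  rw [Prod.mk_sub_mk, Prod.mk_sub_mk] at hmem
  have hsub := mulVec_eq_zero_of_lag_le hlag hmem
    (fun i hi => sub_eq_zero.2 (hu i hi)) (fun i hi => sub_eq_zero.2 (hy i hi))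
  rwa [Pi.sub_apply, mulVec_sub, sub_eq_zero] at hsub

theorem output_eq_of_lag_le (hlag : lag A C ≤ ℓ) {T : ℕ} {x x' : ℕ → Fin n → ℝ}
    {u : ℕ → Fin m → ℝ} {y y' : ℕ → Fin p → ℝ} (h : (x, u, y) ∈ trajectories A B C D T)
    (h' : (x', u, y') ∈ trajectories A B C D T) (hy : ∀ i < ℓ, y i = y' i) :
    ∀ t < T, y t = y' t := by
  intro t ht
  induction t using Nat.strong_induction_on with
  | _ t ih =>
    obtain ht' | ht' := lt_or_ge t ℓ
    · exact hy t ht'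
    have hwin := mulVec_eq_of_lag_le hlag (shift_mem_trajectories h (s := t - ℓ) (by omega))
      (shift_mem_trajectories h' (s := t - ℓ) (by omega)) (fun _ _ => rfl)
      (fun i hi => ih _ (by omega) (by omega))
    simp only [Nat.sub_add_cancel ht'] at hwin
    rw [((mem_trajectories.1 h) t ht).2, ((mem_trajectories.1 h') t ht).2, hwin]

theorem output_eq_of_window_eq_hankel (hlag : lag A C ≤ ℓ) {T k : ℕ} (hk : ℓ ≤ k)
    {xd x : ℕ → Fin n → ℝ} {ud u : ℕ → Fin m → ℝ} {yd y : ℕ → Fin p → ℝ}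
    (hd : (xd, ud, yd) ∈ trajectories A B C D T) (h : (x, u, y) ∈ trajectories A B C D k)
    (g₁ : Fin (T - ℓ) → ℝ) (g₂ : Fin (k - ℓ) → ℝ)
    (hu : ∀ i ≤ ℓ, ∑ j, g₁ j • ud (i + j) + ∑ j, g₂ j • u (i + j) = u (k - ℓ + i))
    (hy : ∀ i ≤ ℓ, ∑ j, g₁ j • yd (i + j) + ∑ j, g₂ j • y (i + j) = y (k - ℓ + i)) :
    y k = C *ᵥ x k + D *ᵥ u k := by
  have hc := add_mem
    (sum_smul_shift_mem_trajectories hd g₁ (↑) (T' := ℓ + 1) fun j => by omega)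
    (sum_smul_shift_mem_trajectories h g₂ (↑) (T' := ℓ + 1) fun j => by omega)
  rw [Prod.mk_add_mk, Prod.mk_add_mk, mem_trajectories] at hc
  have hwin := mulVec_eq_of_lag_le hlag (fun t ht => hc t (by omega))
    (shift_mem_trajectories h (s := k - ℓ) (by omega)) (fun i hi => hu i hi.le)
    (fun i hi => hy i hi.le)
  have hyk := (hc ℓ ℓ.lt_succ_self).2
  simp only [Pi.add_apply, hu ℓ le_rfl, hy ℓ le_rfl, Nat.sub_add_cancel hk] at hwin hyk
  rw [hyk, hwin]

theorem stateSeq_mem_trajectories_of_hankel (hlag : lag A C ≤ ℓ) {T T₀ T₁ : ℕ}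
    (hT₀ : ℓ ≤ T₀) {xd : ℕ → Fin n → ℝ} {ud : ℕ → Fin m → ℝ} {yd : ℕ → Fin p → ℝ}
    (hd : (xd, ud, yd) ∈ trajectories A B C D T) {x₀ : Fin n → ℝ} {u : ℕ → Fin m → ℝ}
    {y : ℕ → Fin p → ℝ} (h₀ : (stateSeq A B x₀ u, u, y) ∈ trajectories A B C D T₀)
    (hstep : ∀ k, T₀ ≤ k → k < T₁ → ∃ (g₁ : Fin (T - ℓ) → ℝ) (g₂ : Fin (k - ℓ) → ℝ),
      (∀ i ≤ ℓ, ∑ j, g₁ j • ud (i + j) + ∑ j, g₂ j • u (i + j) = u (k - ℓ + i)) ∧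
      (∀ i ≤ ℓ, ∑ j, g₁ j • yd (i + j) + ∑ j, g₂ j • y (i + j) = y (k - ℓ + i))) :
    (stateSeq A B x₀ u, u, y) ∈ trajectories A B C D T₁ := by
  rw [stateSeq_mem_trajectories_iff] at h₀ ⊢
  intro k hk
  induction k using Nat.strong_induction_on with
  | _ k ih =>
    obtain hk₀ | hk₀ := lt_or_ge k T₀
    · exact h₀ k hk₀
    obtain ⟨g₁, g₂, hu, hy⟩ := hstep k hk₀ hk
    exact output_eq_of_window_eq_hankel hlag (by omega) hd
      (stateSeq_mem_trajectories_iff.2 fun t ht => ih t ht (by omega)) g₁ g₂ hu hy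

theorem eq_of_isTraj_append (hlag : lag A C ≤ ℓ) {Tini Tf : ℕ} (hTini : ℓ ≤ Tini)
    {uini : Fin Tini → Fin m → ℝ} {yini : Fin Tini → Fin p → ℝ} {uf : Fin Tf → Fin m → ℝ}
    {yf yf' : Fin Tf → Fin p → ℝ}
    (h : IsTraj A B C D (Tini + Tf) (Fin.append uini uf) (Fin.append yini yf))
    (h' : IsTraj A B C D (Tini + Tf) (Fin.append uini uf) (Fin.append yini yf')) :
    yf = yf' := by
  obtain ⟨x, hx⟩ := isTraj_iff_extend.1 h
  obtain ⟨x', hx'⟩ := isTraj_iff_extend.1 h'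
  have hy := output_eq_of_lag_le hlag hx hx' fun i hi => by
    rw [extend_val_append_of_lt _ _ (by omega), extend_val_append_of_lt _ _ (by omega)]
  funext s
  simpa only [extend_val_append_add] using hy (Tini + s) (by omega)

end LinearSystems

/-- Step-by-step prediction and weaving: if at each time `t` the next sample
`(u^t last ℓ, uf t; y^t last ℓ, yf t)` lies in the image of the depth-`(ℓ+1)` Hankel
matrices of the data and of the extended initial trajectory `(u^t, y^t)`, then every
explaining system has `(uini·uf, yini·yf)` as a trajectory, `yf` is the unique such
output for each explaining system, and the data is informative for unique prediction. -/
theorem predict_and_weave_informative {m p : ℕ} (L N T Tini Tf ℓ : ℕ)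
    (ud : Fin T → Fin m → ℝ) (yd : Fin T → Fin p → ℝ)
    (uini : Fin Tini → Fin m → ℝ) (yini : Fin Tini → Fin p → ℝ)
    (uf : Fin Tf → Fin m → ℝ)
    (hTini : ℓ ≤ Tini)
    (hℓ : ∀ (n' : ℕ) (A' : Matrix (Fin n') (Fin n') ℝ) (B' : Matrix (Fin n') (Fin m) ℝ)
      (C' : Matrix (Fin p) (Fin n') ℝ) (D' : Matrix (Fin p) (Fin m) ℝ),
      Explaining L N T Tini ud yd uini yini A' B' C' D' → lag A' C' ≤ ℓ)
    (yf : Fin Tf → Fin p → ℝ)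
    (hstep : ∀ t : Fin Tf,
      ∃ (g₁ : Fin (T - ℓ) → ℝ) (g₂ : Fin (Tini + (t : ℕ) - ℓ) → ℝ),
        (∀ i : Fin (ℓ + 1),
          (∑ j : Fin (T - ℓ),
              g₁ j • ud ⟨i + j, by have := i.2; have := j.2; omega⟩) +
          (∑ j : Fin (Tini + (t : ℕ) - ℓ),
              g₂ j • catUpTo uini uf t ⟨i + j, by have := i.2; have := j.2; omega⟩) =
          Fin.append
            (fun r : Fin ℓ =>
              catUpTo uini uf t ⟨Tini + (t : ℕ) - ℓ + r, by have := r.2; omega⟩)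
            (fun _ : Fin 1 => uf t) i) ∧
        (∀ i : Fin (ℓ + 1),
          (∑ j : Fin (T - ℓ),
              g₁ j • yd ⟨i + j, by have := i.2; have := j.2; omega⟩) +
          (∑ j : Fin (Tini + (t : ℕ) - ℓ),
              g₂ j • catUpTo yini yf t ⟨i + j, by have := i.2; have := j.2; omega⟩) =
          Fin.append
            (fun r : Fin ℓ =>
              catUpTo yini yf t ⟨Tini + (t : ℕ) - ℓ + r, by have := r.2; omega⟩)
            (fun _ : Fin 1 => yf t) i)) :
    (∀ (n' : ℕ) (A' : Matrix (Fin n') (Fin n') ℝ) (B' : Matrix (Fin n') (Fin m) ℝ)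
        (C' : Matrix (Fin p) (Fin n') ℝ) (D' : Matrix (Fin p) (Fin m) ℝ),
        Explaining L N T Tini ud yd uini yini A' B' C' D' →
        IsTraj A' B' C' D' (Tini + Tf) (Fin.append uini uf) (Fin.append yini yf) ∧
        ∀ yf' : Fin Tf → Fin p → ℝ,
          IsTraj A' B' C' D' (Tini + Tf) (Fin.append uini uf) (Fin.append yini yf') →
          yf' = yf) ∧
    Informative L N T Tini Tf ud yd uini yini uf := by
  have key : ∀ (n' : ℕ) (A : Matrix (Fin n') (Fin n') ℝ) (B : Matrix (Fin n') (Fin m) ℝ)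
      (C : Matrix (Fin p) (Fin n') ℝ) (D : Matrix (Fin p) (Fin m) ℝ),
      Explaining L N T Tini ud yd uini yini A B C D →
      IsTraj A B C D (Tini + Tf) (Fin.append uini uf) (Fin.append yini yf) ∧
      ∀ yf' : Fin Tf → Fin p → ℝ,
        IsTraj A B C D (Tini + Tf) (Fin.append uini uf) (Fin.append yini yf') → yf' = yf := by
    intro n' A B C D hE
    have hlag := hℓ n' A B C D hE
    obtain ⟨-, -, hd, hini⟩ := hE
    obtain ⟨xd, hd⟩ := isTraj_iff_extend.1 hd
    obtain ⟨xi, hini⟩ := isTraj_restrict_iff.1 <|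
      show IsTraj A B C D Tini (fun t => Function.extend Fin.val (Fin.append uini uf) 0 t)
        (fun t => Function.extend Fin.val (Fin.append yini yf) 0 t) by
      simpa only [extend_val_append_val] using hini
    have hweave := stateSeq_mem_trajectories_of_hankel hlag hTini hd
      (stateSeq_mem_trajectories hini) (T₁ := Tini + Tf) fun k hk hk' => by
        obtain ⟨s, rfl⟩ := Nat.exists_eq_add_of_le hk
        obtain ⟨g₁, g₂, hu, hy⟩ := hstep ⟨s, by omega⟩
        exact ⟨g₁, g₂, hankel_window_eq_extend_val hTini ud uini uf _ g₁ g₂ hu,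
          hankel_window_eq_extend_val hTini yd yini yf _ g₁ g₂ hy⟩
    have hyf := isTraj_iff_extend.2 ⟨_, hweave⟩
    exact ⟨hyf, fun yf' hyf' => eq_of_isTraj_append hlag hTini hyf' hyf⟩
  refine ⟨key, fun n' A B C D hE => ⟨yf, key n' A B C D hE⟩,
    yf, fun n' A B C D hE => (key n' A B C D hE).1⟩
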